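/- arXiv:1305.6390 — 2 statements merged into one kernel-verified Lean document; each statement's English description precedes it below -/
import Mathlib

section
/- For every positive integer h and every real x with 0 ≤ x ≤ 1, we have 1 - (1 - x/h)^h ≥ (1 - 1/e) · x. -/
/-!
`(1 - x/h)^h ≤ e^{-x}`, and on `[0, 1]` the convex function `e^{-x}` lies below its chord
`1 - (1 - 1/e) x`.
-/

open Real

theorem Real.exp_mul_le_one_add_mul {a x : ℝ} (hx0 : 0 ≤ x) (hx1 : x ≤ 1) :
    exp (x * a) ≤ 1 + (exp a - 1) * x := by
  have hchord := convexOn_exp.2 (Set.mem_univ 0) (Set.mem_univ a) (sub_nonneg.2 hx1) hx0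
    (sub_add_cancel 1 x)
  simp only [smul_eq_mul, mul_zero, zero_add, exp_zero, mul_one] at hchord
  linarith

theorem rounding_key_inequality (h : ℕ) (hh : 0 < h) (x : ℝ) (hx0 : 0 ≤ x) (hx1 : x ≤ 1) :
    1 - (1 - x / (h : ℝ)) ^ h ≥ (1 - 1 / Real.exp 1) * x := by
  have hxh : x ≤ h := hx1.trans (Nat.one_le_cast.2 hh)
  have hpow : (1 - x / h) ^ h ≤ exp (-x) := one_sub_div_pow_le_exp_neg hxh
  have hchord : exp (x * -1) ≤ 1 + (exp (-1) - 1) * x := exp_mul_le_one_add_mul hx0 hx1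
  rw [one_div, ← exp_neg]
  rw [mul_neg_one] at hchord
  linarith
end

section
/- For every integer h ≥ 2, we have 1 - (1 - 1/h)^h ≥ 1 - 1/e + 1/(32·h²). -/
/-!
Taking one more term of the series `-log (1 - x) = x + x²/2 + …` gives
`(1 - 1/h)^h ≤ exp (-1 - 1/(2h))`, and `exp s ≥ 1 + s` turns this into
`(1 - 1/h)^h ≤ e⁻¹ · 2h/(2h + 1)`. The resulting gap `1/(e(2h + 1))` beats `1/(32h²)` since `e < 3`.
-/

open Real Finset

lemma add_sq_div_two_le_neg_log_one_sub {x : ℝ} (hx₀ : 0 ≤ x) (hx₁ : x < 1) :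
    x + x ^ 2 / 2 ≤ -log (1 - x) := by
  have hsum := hasSum_pow_div_log_of_abs_lt_one (by rwa [abs_of_nonneg hx₀])
  have := sum_le_hasSum (range 2) (fun n _ => by positivity) hsum
  norm_num [sum_range_succ] at this
  linarith

lemma one_sub_inv_pow_le_exp {n : ℕ} (hn : 1 < n) :
    (1 - 1 / (n : ℝ)) ^ n ≤ exp (-1 - 1 / (2 * n)) := by
  have hn' : (1 : ℝ) < n := by exact_mod_cast hn
  have hpos : 0 < 1 - 1 / (n : ℝ) := by
    rw [sub_pos, div_lt_one (by linarith)]; exact hn'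
  have hlog := add_sq_div_two_le_neg_log_one_sub (x := 1 / (n : ℝ)) (by positivity)
    (by rw [div_lt_one (by linarith)]; exact hn')
  calc (1 - 1 / (n : ℝ)) ^ n = exp (n * log (1 - 1 / n)) := by
        rw [exp_nat_mul, exp_log hpos]
    _ ≤ exp (-1 - 1 / (2 * n)) := by
        gcongr
        have hscale : (n : ℝ) * (1 / n + (1 / n) ^ 2 / 2) = 1 + 1 / (2 * n) := by
          field_simp
        nlinarith

lemma exp_sub_le_exp_div_one_add {a s : ℝ} (hs : 0 ≤ s) :
    exp (a - s) ≤ exp a / (1 + s) := by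
  rw [exp_sub, div_le_div_iff_of_pos_left (exp_pos a) (exp_pos s) (by linarith)]
  linarith [add_one_le_exp s]

theorem quantitative_rounding_bound (h : ℕ) (hh : 2 ≤ h) :
    1 - (1 - 1 / (h : ℝ)) ^ h ≥ 1 - 1 / Real.exp 1 + 1 / (32 * (h : ℝ) ^ 2) := by
  have hH : (2 : ℝ) ≤ h := by exact_mod_cast hh
  have hpow : (1 - 1 / (h : ℝ)) ^ h ≤ exp (-1) / (1 + 1 / (2 * h)) :=
    (one_sub_inv_pow_le_exp hh).trans (exp_sub_le_exp_div_one_add (by positivity))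
  have hgap : 1 / (32 * (h : ℝ) ^ 2) ≤ 1 / exp 1 - exp (-1) / (1 + 1 / (2 * h)) := by
    have he := exp_one_lt_d9
    have hgap_eq : 1 / exp 1 - exp (-1) / (1 + 1 / (2 * h)) = 1 / (exp 1 * (2 * h + 1)) := by
      rw [exp_neg]; field_simp; ring
    rw [hgap_eq]
    apply one_div_le_one_div_of_le (by positivity)
    nlinarith
  linarith
end
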